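/- arXiv:2603.27881 — 4 statements merged into one kernel-verified Lean document; each statement's English description precedes it below -/
import Mathlib

section
/- Let f be a probability density on ℝ that is eventually positive and satisfies f(x) ~ C₁ x^{C₂} exp(−x^{C₃}/C₄) as x → ∞ for positive constants C₁, C₂, C₃, C₄, and let F be its CDF, so 1 − F(x) = ∫_x^∞ f(t) dt. Then lim_{x→∞} x^{C₃−1}(1 − F(x))/f(x) = C₄/C₃; equivalently, 1 − F(x) ~ (C₄C₁/C₃) x^{C₂+1−C₃} exp(−x^{C₃}/C₄) as x → ∞. -/
open MeasureTheory Filter Set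

noncomputable def wg (C₁ C₂ C₃ C₄ : ℝ) (x : ℝ) : ℝ :=
  C₁ * x ^ C₂ * Real.exp (-x ^ C₃ / C₄)

noncomputable def wG (C₁ C₂ C₃ C₄ : ℝ) (x : ℝ) : ℝ :=
  C₄ * C₁ / C₃ * x ^ (C₂ + 1 - C₃) * Real.exp (-x ^ C₃ / C₄)

noncomputable def wphi (C₁ C₂ C₃ C₄ : ℝ) (x : ℝ) : ℝ :=
  C₄ / C₃ * ((C₂ + 1 - C₃) * x ^ (-C₃) - C₃ / C₄)

lemma wg_pos (C₁ C₂ C₃ C₄ : ℝ) (h1 : 0 < C₁) {x : ℝ} (hx : 0 < x) :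
    0 < wg C₁ C₂ C₃ C₄ x := by
  unfold wg; positivity

lemma wg_meas (C₁ C₂ C₃ C₄ : ℝ) : Measurable (wg C₁ C₂ C₃ C₄) := by
  unfold wg; fun_prop

lemma wg_contAt (C₁ C₂ C₃ C₄ : ℝ) {x : ℝ} (hx : 0 < x) :
    ContinuousAt (wg C₁ C₂ C₃ C₄) x := by
  unfold wg
  have h1 : ContinuousAt (fun y : ℝ => y ^ C₂) x :=
    Real.continuousAt_rpow_const x C₂ (Or.inl hx.ne')
  have h2 : ContinuousAt (fun y : ℝ => y ^ C₃) x :=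
    Real.continuousAt_rpow_const x C₃ (Or.inl hx.ne')
  exact (continuousAt_const.mul h1).mul
    (Real.continuous_exp.continuousAt.comp ((h2.neg).div_const C₄))

lemma wphi_lim {C₁ C₂ C₃ C₄ : ℝ} (h1 : 0 < C₁) (h3 : 0 < C₃) (h4 : 0 < C₄) :
    Tendsto (wphi C₁ C₂ C₃ C₄) atTop (nhds (-1)) := by
  have h := (((tendsto_rpow_neg_atTop h3).const_mul (C₂ + 1 - C₃)).sub_const
      (C₃ / C₄)).const_mul (C₄ / C₃)
  have : C₄ / C₃ * ((C₂ + 1 - C₃) * 0 - C₃ / C₄) = -1 := by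
    field_simp
    ring
  rw [this] at h
  exact h

lemma wG_zero {C₁ C₂ C₃ C₄ : ℝ} (h3 : 0 < C₃) (h4 : 0 < C₄) :
    Tendsto (wG C₁ C₂ C₃ C₄) atTop (nhds 0) := by
  have base := tendsto_rpow_mul_exp_neg_mul_atTop_nhds_zero
    ((C₂ + 1 - C₃) / C₃) (1 / C₄) (by positivity)
  have comp := (base.comp (tendsto_rpow_atTop h3)).const_mul (C₄ * C₁ / C₃)
  rw [mul_zero] at comp
  refine comp.congr' ?_
  filter_upwards [eventually_gt_atTop (0 : ℝ)] with x hx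
  have e1 : (x ^ C₃) ^ ((C₂ + 1 - C₃) / C₃) = x ^ (C₂ + 1 - C₃) := by
    rw [← Real.rpow_mul hx.le]
    congr 1
    field_simp
  simp only [Function.comp]
  rw [e1, wG]
  rw [show -(1 / C₄) * x ^ C₃ = -x ^ C₃ / C₄ by ring]
  ring

lemma wG_deriv {C₁ C₂ C₃ C₄ : ℝ} (h1 : 0 < C₁) (h3 : 0 < C₃) (h4 : 0 < C₄)
    {x : ℝ} (hx : 0 < x) :
    HasDerivAt (wG C₁ C₂ C₃ C₄) (wg C₁ C₂ C₃ C₄ x * wphi C₁ C₂ C₃ C₄ x) x := by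
  have hx3 : HasDerivAt (fun y : ℝ => y ^ C₃) (C₃ * x ^ (C₃ - 1)) x :=
    Real.hasDerivAt_rpow_const (Or.inl hx.ne')
  have hE : HasDerivAt (fun y : ℝ => Real.exp (-y ^ C₃ / C₄))
      (Real.exp (-x ^ C₃ / C₄) * (-(C₃ * x ^ (C₃ - 1)) / C₄)) x :=
    ((hx3.neg).div_const C₄).exp
  have hxa : HasDerivAt (fun y : ℝ => y ^ (C₂ + 1 - C₃))
      ((C₂ + 1 - C₃) * x ^ (C₂ + 1 - C₃ - 1)) x :=
    Real.hasDerivAt_rpow_const (Or.inl hx.ne')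
  have hprod := (hxa.mul hE).const_mul (C₄ * C₁ / C₃)
  have hfun : wG C₁ C₂ C₃ C₄ =
      fun y : ℝ => C₄ * C₁ / C₃ * (y ^ (C₂ + 1 - C₃) * Real.exp (-y ^ C₃ / C₄)) := by
    funext y; rw [wG]; ring
  rw [hfun]
  refine hprod.congr_deriv ?_
  have A : x ^ (C₂ + 1 - C₃ - 1) = x ^ C₂ * x ^ (-C₃) := by
    rw [← Real.rpow_add hx]; congr 1; ring
  have B : x ^ (C₃ - 1) = x ^ C₂ * (x ^ (C₂ + 1 - C₃))⁻¹ := by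
    rw [← Real.rpow_neg hx.le, ← Real.rpow_add hx]; congr 1; ring
  rw [wg, wphi, A, B]
  field_simp
  ring

lemma wG_key {C₁ C₂ C₃ C₄ : ℝ} (h3 : 0 < C₃) {x : ℝ} (hx : 0 < x) :
    x ^ (C₃ - 1) * wG C₁ C₂ C₃ C₄ x = C₄ / C₃ * wg C₁ C₂ C₃ C₄ x := by
  have B : x ^ (C₃ - 1) = x ^ C₂ * (x ^ (C₂ + 1 - C₃))⁻¹ := by
    rw [← Real.rpow_neg hx.le, ← Real.rpow_add hx]; congr 1; ring
  rw [wg, wG, B]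
  field_simp

/-- **Weibull-type tail integration.** If a probability density `f` is eventually positive
and satisfies `f(x) ~ C₁ x^{C₂} exp(-x^{C₃}/C₄)` as `x → ∞`, then
`x^{C₃-1}(1 - F(x))/f(x) → C₄/C₃` where `1 - F(x) = ∫_x^∞ f`; equivalently
`1 - F(x) ~ (C₄C₁/C₃) x^{C₂+1-C₃} exp(-x^{C₃}/C₄)`. -/
theorem weibull_tail_survival
    (f : ℝ → ℝ) (hf0 : ∀ x, 0 ≤ f x) (hfi : Integrable f) (hf1 : ∫ x, f x = 1)
    (hfpos : ∀ᶠ x in atTop, 0 < f x)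
    (C₁ C₂ C₃ C₄ : ℝ) (h1 : 0 < C₁) (h2 : 0 < C₂) (h3 : 0 < C₃) (h4 : 0 < C₄)
    (hasym : Tendsto (fun x => f x / (C₁ * x ^ C₂ * Real.exp (-x ^ C₃ / C₄)))
      atTop (nhds 1)) :
    Tendsto (fun x => x ^ (C₃ - 1) * (∫ t in Ioi x, f t) / f x) atTop (nhds (C₄ / C₃)) ∧
    Tendsto (fun x => (∫ t in Ioi x, f t) /
      (C₄ * C₁ / C₃ * x ^ (C₂ + 1 - C₃) * Real.exp (-x ^ C₃ / C₄))) atTop (nhds 1) := by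
  have hasym' : Tendsto (fun x => f x / wg C₁ C₂ C₃ C₄ x) atTop (nhds 1) := hasym
  -- choose a₀
  have h_half : ∀ᶠ x in atTop, 1/2 < f x / wg C₁ C₂ C₃ C₄ x :=
    hasym'.eventually (eventually_gt_nhds (by norm_num))
  obtain ⟨a₀, ha₀⟩ := ((hfpos.and h_half).and (eventually_ge_atTop (1:ℝ))).exists_forall_of_atTop
  have ha₀1 : (1:ℝ) ≤ a₀ := (ha₀ a₀ le_rfl).2
  have ha₀pos : (0:ℝ) < a₀ := lt_of_lt_of_le one_pos ha₀1
  have hxpos : ∀ x, a₀ ≤ x → 0 < x := fun x hx => lt_of_lt_of_le ha₀pos hx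
  have hgle : ∀ x, a₀ ≤ x → wg C₁ C₂ C₃ C₄ x ≤ 2 * f x := by
    intro x hx
    have hgp := wg_pos C₁ C₂ C₃ C₄ h1 (hxpos x hx)
    have := ((ha₀ x hx).1).2
    rw [lt_div_iff₀ hgp] at this
    linarith
  -- integrability of g on Ioi a₀
  have hgint : IntegrableOn (wg C₁ C₂ C₃ C₄) (Ioi a₀) := by
    refine Integrable.mono' ((hfi.const_mul 2).integrableOn) 
      ((wg_meas C₁ C₂ C₃ C₄).aestronglyMeasurable.restrict) ?_
    refine (ae_restrict_iff' measurableSet_Ioi).2 (Filter.Eventually.of_forall fun x hx => ?_)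
    rw [Real.norm_eq_abs, abs_of_nonneg (wg_pos C₁ C₂ C₃ C₄ h1 (hxpos x (le_of_lt hx))).le]
    exact hgle x (le_of_lt hx)
  -- tail splitting
  have hsplit : ∀ (h : ℝ → ℝ), IntegrableOn h (Ioi a₀) → ∀ x, a₀ ≤ x →
      (∫ t in Ioi x, h t) = (∫ t in Ioi a₀, h t) - ∫ t in a₀..x, h t := by
    intro h hint x hx
    rw [intervalIntegral.integral_of_le hx, eq_sub_iff_add_eq, add_comm,
      ← MeasureTheory.setIntegral_union (Set.Ioc_disjoint_Ioi le_rfl) measurableSet_Ioi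
        (hint.mono_set Set.Ioc_subset_Ioi_self) (hint.mono_set (Set.Ioi_subset_Ioi hx)),
      Set.Ioc_union_Ioi_eq_Ioi hx]
  have htail0 : ∀ (h : ℝ → ℝ), IntegrableOn h (Ioi a₀) →
      Tendsto (fun x => ∫ t in Ioi x, h t) atTop (nhds 0) := by
    intro h hint
    have key := MeasureTheory.intervalIntegral_tendsto_integral_Ioi a₀ hint tendsto_id
    have h2' := (tendsto_const_nhds (x := ∫ t in Ioi a₀, h t) (f := atTop)).sub key
    rw [sub_self] at h2'
    refine h2'.congr' ?_
    filter_upwards [eventually_ge_atTop a₀] with x hx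
    exact (hsplit h hint x hx).symm
  have htailg0 := htail0 _ hgint
  have htailf0 := htail0 f hfi.integrableOn
  -- derivative of the tail of g
  have htailGderiv : ∀ x : ℝ, a₀ < x →
      HasDerivAt (fun u => ∫ t in Ioi u, wg C₁ C₂ C₃ C₄ t) (-(wg C₁ C₂ C₃ C₄ x)) x := by
    intro x hx
    have hii : IntervalIntegrable (wg C₁ C₂ C₃ C₄) volume a₀ x :=
      (intervalIntegrable_iff_integrableOn_Ioc_of_le hx.le).2
        (hgint.mono_set Set.Ioc_subset_Ioi_self)
    have hFTC := intervalIntegral.integral_hasDerivAt_right hii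
      ((wg_meas C₁ C₂ C₃ C₄).stronglyMeasurable.stronglyMeasurableAtFilter)
      (wg_contAt C₁ C₂ C₃ C₄ (hxpos x hx.le))
    have hD := hFTC.const_sub (∫ t in Ioi a₀, wg C₁ C₂ C₃ C₄ t)
    refine hD.congr_of_eventuallyEq ?_
    filter_upwards [Ioi_mem_nhds hx] with u hu
    exact hsplit _ hgint u (le_of_lt hu)
  -- positivity of tail of g
  have htailGpos : ∀ x, a₀ ≤ x → 0 < ∫ t in Ioi x, wg C₁ C₂ C₃ C₄ t := by
    intro x hx
    refine (setIntegral_pos_iff_support_of_nonneg_ae ?_ (hgint.mono_set (Set.Ioi_subset_Ioi hx))).2 ?_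
    · refine (ae_restrict_iff' measurableSet_Ioi).2 (Filter.Eventually.of_forall fun t ht => ?_)
      exact (wg_pos C₁ C₂ C₃ C₄ h1 (lt_trans (hxpos x hx) ht)).le
    · have hsub : Ioi x ⊆ Function.support (wg C₁ C₂ C₃ C₄) := fun t ht =>
        (wg_pos C₁ C₂ C₃ C₄ h1 (lt_trans (hxpos x hx) ht)).ne'
      rw [Set.inter_eq_self_of_subset_right hsub, Real.volume_Ioi]
      simp
  -- l'Hopital : tail of g over G tends to 1
  have hlhop : Tendsto (fun x => (∫ t in Ioi x, wg C₁ C₂ C₃ C₄ t) / wG C₁ C₂ C₃ C₄ x)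
      atTop (nhds 1) := by
    have hφ := wphi_lim (C₁ := C₁) (C₂ := C₂) h1 h3 h4
    refine HasDerivAt.lhopital_zero_atTop
      (f' := fun x => -(wg C₁ C₂ C₃ C₄ x)) (g' := fun x => wg C₁ C₂ C₃ C₄ x * wphi C₁ C₂ C₃ C₄ x)
      ?_ ?_ ?_ htailg0 (wG_zero h3 h4) ?_
    · filter_upwards [eventually_gt_atTop a₀] with x hx
      exact htailGderiv x hx
    · filter_upwards [eventually_gt_atTop (0:ℝ)] with x hx
      exact wG_deriv h1 h3 h4 hx
    · filter_upwards [eventually_gt_atTop (0:ℝ), hφ.eventually_ne (by norm_num : (-1:ℝ) ≠ 0)]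
        with x hx hφx
      exact mul_ne_zero (wg_pos C₁ C₂ C₃ C₄ h1 hx).ne' hφx
    · have hinv := (hφ.inv₀ (by norm_num)).neg
      rw [show -((-1:ℝ))⁻¹ = 1 by norm_num] at hinv
      refine hinv.congr' ?_
      filter_upwards [eventually_gt_atTop (0:ℝ), hφ.eventually_ne (by norm_num : (-1:ℝ) ≠ 0)]
        with x hx hφx
      have hgne := (wg_pos C₁ C₂ C₃ C₄ h1 hx).ne'
      field_simp
  -- sandwich : tail of f over tail of g tends to 1
  have hratio : Tendsto
      (fun x => (∫ t in Ioi x, f t) / (∫ t in Ioi x, wg C₁ C₂ C₃ C₄ t)) atTop (nhds 1) := by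
    rw [Metric.tendsto_nhds]
    intro ε hε
    have hδ : 0 < ε/2 := by linarith
    have hev := hasym'.eventually (Metric.ball_mem_nhds (1:ℝ) hδ)
    obtain ⟨b, hb⟩ := (hev.and (eventually_ge_atTop a₀)).exists_forall_of_atTop
    filter_upwards [eventually_ge_atTop (max a₀ b)] with x hx
    have hxa : a₀ ≤ x := le_trans (le_max_left _ _) hx
    have hxb : b ≤ x := le_trans (le_max_right _ _) hx
    have htgp := htailGpos x hxa
    have hbound : ∀ t, x < t → (1 - ε/2) * wg C₁ C₂ C₃ C₄ t ≤ f t ∧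
        f t ≤ (1 + ε/2) * wg C₁ C₂ C₃ C₄ t := by
      intro t ht
      have htb : b ≤ t := le_trans hxb ht.le
      have hgp := wg_pos C₁ C₂ C₃ C₄ h1 (hxpos t (le_trans hxa ht.le))
      have hd := (hb t htb).1
      simp only [Metric.mem_ball, Real.dist_eq] at hd
      rw [abs_lt] at hd
      constructor
      · rw [← sub_nonneg]
        have h' : 1 - ε/2 < f t / wg C₁ C₂ C₃ C₄ t := by linarith [hd.1]
        rw [lt_div_iff₀ hgp] at h'
        linarith
      · have h' : f t / wg C₁ C₂ C₃ C₄ t < 1 + ε/2 := by linarith [hd.2]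
        rw [div_lt_iff₀ hgp] at h'
        linarith
    have hup : (∫ t in Ioi x, f t) ≤ (1 + ε/2) * ∫ t in Ioi x, wg C₁ C₂ C₃ C₄ t := by
      rw [← MeasureTheory.integral_const_mul]
      refine setIntegral_mono_on hfi.integrableOn
        ((hgint.mono_set (Set.Ioi_subset_Ioi hxa)).const_mul _) measurableSet_Ioi ?_
      exact fun t ht => (hbound t ht).2
    have hlo : (1 - ε/2) * (∫ t in Ioi x, wg C₁ C₂ C₃ C₄ t) ≤ ∫ t in Ioi x, f t := by
      rw [← MeasureTheory.integral_const_mul]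
      refine setIntegral_mono_on
        ((hgint.mono_set (Set.Ioi_subset_Ioi hxa)).const_mul _) hfi.integrableOn
        measurableSet_Ioi ?_
      exact fun t ht => (hbound t ht).1
    rw [Real.dist_eq, abs_lt]
    have hub : (∫ t in Ioi x, f t) / (∫ t in Ioi x, wg C₁ C₂ C₃ C₄ t) ≤ 1 + ε/2 :=
      (div_le_iff₀ htgp).2 hup
    have hlb : 1 - ε/2 ≤ (∫ t in Ioi x, f t) / (∫ t in Ioi x, wg C₁ C₂ C₃ C₄ t) :=
      (le_div_iff₀ htgp).2 hlo
    constructor <;> [linarith; linarith]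
  -- part 2
  have part2 : Tendsto (fun x => (∫ t in Ioi x, f t) / wG C₁ C₂ C₃ C₄ x) atTop (nhds 1) := by
    have h := hratio.mul hlhop
    rw [mul_one] at h
    refine h.congr' ?_
    filter_upwards [eventually_ge_atTop a₀] with x hx
    have htgne := (htailGpos x hx).ne'
    rw [div_mul_div_comm, mul_comm (∫ t in Ioi x, wg C₁ C₂ C₃ C₄ t),
      mul_div_mul_right _ _ htgne]
  refine ⟨?_, part2⟩
  -- part 1
  have hgf : Tendsto (fun x => wg C₁ C₂ C₃ C₄ x / f x) atTop (nhds 1) := by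
    have h := hasym'.inv₀ one_ne_zero
    rw [inv_one] at h
    refine h.congr (fun x => ?_)
    rw [inv_div]
  have combo := (part2.mul (tendsto_const_nhds (x := C₄/C₃))).mul hgf
  rw [one_mul, mul_one] at combo
  refine combo.congr' ?_
  filter_upwards [eventually_ge_atTop a₀, hfpos] with x hx hfx
  have hx0 : 0 < x := hxpos x hx
  have hgp := wg_pos C₁ C₂ C₃ C₄ h1 hx0
  have hGp : 0 < wG C₁ C₂ C₃ C₄ x := by
    rw [wG]; positivity
  have key := wG_key (C₁ := C₁) (C₂ := C₂) (C₄ := C₄) h3 hx0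
  have key' : x ^ (C₃ - 1) * wG C₁ C₂ C₃ C₄ x * C₃ = C₄ * wg C₁ C₂ C₃ C₄ x := by
    rw [key]; field_simp
  field_simp
  linear_combination (-(∫ t in Ioi x, f t)) * key'
end

section
/- Let X and ε be independent real-valued random variables with p := P(X < ε) > 0. Suppose X has density f_X with f_X(x) ~ (C/λ) x^{−1/λ−1} as x → ∞ for constants C, λ > 0, and ε has density f_ε with f_ε(x) ~ C₁ x^{C₂} exp(−x^{C₃}/C₄) as x → ∞ for positive constants C₁, C₂, C₃, C₄. Then the conditional density g of X given {X < ε} satisfies g(x) ~ (C₄C₁C/(C₃λp)) x^{C₂ − 1/λ − C₃} exp(−x^{C₃}/C₄) as x → ∞; in particular, g has an exponentially decaying right tail. -/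
open MeasureTheory ProbabilityTheory Filter Set

lemma tail_ratio_aux (fε : ℝ → ℝ) (hfεm : Measurable fε) (hfε0 : ∀ x, 0 ≤ fε x)
    (hint : Integrable fε)
    (hT0 : Tendsto (fun x => ∫ t in Ioi x, fε t) atTop (nhds 0))
    (C₁ C₂ C₃ C₄ : ℝ) (h1 : 0 < C₁) (h3 : 0 < C₃) (h4 : 0 < C₄)
    (hfεtail : Tendsto (fun x => fε x / (C₁ * x ^ C₂ * Real.exp (-x ^ C₃ / C₄)))
      atTop (nhds 1)) :
    Tendsto (fun x => (∫ t in Ioi x, fε t) /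
      (C₄ * C₁ / C₃ * x ^ (C₂ + 1 - C₃) * Real.exp (-x ^ C₃ / C₄))) atTop (nhds 1) := by
  set h : ℝ → ℝ := fun t => C₁ * t ^ C₂ * Real.exp (-t ^ C₃ / C₄) with hh
  set K : ℝ := C₄ * C₁ / C₃ with hK
  set a : ℝ := C₂ + 1 - C₃ with ha
  set G : ℝ → ℝ := fun x => K * x ^ a * Real.exp (-x ^ C₃ / C₄) with hG
  set H : ℝ → ℝ := fun x => ∫ t in Ioi x, h t with hHdef
  set T : ℝ → ℝ := fun x => ∫ t in Ioi x, fε t with hTdef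
  have hmeas : Measurable h := by fun_prop
  have hpos : ∀ t : ℝ, 0 < t → 0 < h t := fun t ht => by
    have := Real.rpow_pos_of_pos ht C₂
    positivity
  -- a threshold M beyond which h ≤ 2 fε
  obtain ⟨M', hM'⟩ := eventually_atTop.mp
    (Metric.tendsto_nhds.mp hfεtail (1/2) (by norm_num))
  set M : ℝ := max M' 2 with hM
  have hM2 : (2:ℝ) ≤ M := le_max_right _ _
  have hMpos : (0:ℝ) < M := by linarith
  have hhle : ∀ t : ℝ, M ≤ t → h t ≤ 2 * fε t := by
    intro t ht
    have htpos : 0 < t := lt_of_lt_of_le (by linarith) ht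
    have hd := hM' t (le_trans (le_max_left _ _) ht)
    rw [Real.dist_eq, abs_lt] at hd
    have hht := hpos t htpos
    have : 1/2 < fε t / h t := by linarith [hd.1]
    nlinarith [(div_lt_iff₀ hht).mp (by linarith : fε t / h t < 3/2),
      (lt_div_iff₀ hht).mp this]
  have hhInt : ∀ x : ℝ, M ≤ x → IntegrableOn h (Ioi x) := by
    intro x hx
    refine Integrable.mono' ((hint.integrableOn).const_mul 2)
      hmeas.aestronglyMeasurable.restrict ?_
    rw [ae_restrict_iff' measurableSet_Ioi]
    filter_upwards with t ht
    have htM : M ≤ t := le_of_lt (lt_of_le_of_lt hx ht)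
    have htpos : 0 < t := lt_of_lt_of_le hMpos htM
    rw [Real.norm_eq_abs, abs_of_pos (hpos t htpos)]
    exact hhle t htM
  have hHpos : ∀ x : ℝ, M ≤ x → 0 < H x := by
    intro x hx
    have hae : 0 ≤ᵐ[volume.restrict (Ioi x)] h :=
      (ae_restrict_iff' measurableSet_Ioi).mpr (by
        filter_upwards with t ht
        exact (hpos t (lt_trans (lt_of_lt_of_le hMpos hx) (mem_Ioi.mp ht))).le)
    rw [hHdef]
    rw [setIntegral_pos_iff_support_of_nonneg_ae hae (hhInt x hx)]
    have hsub : Ioi x ⊆ Function.support h ∩ Ioi x := by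
      intro t ht
      exact ⟨(hpos t (lt_trans (lt_of_lt_of_le hMpos hx) (mem_Ioi.mp ht))).ne', ht⟩
    calc (0:ENNReal) < volume (Ioi x) := by simp [Real.volume_Ioi]
      _ ≤ volume (Function.support h ∩ Ioi x) := measure_mono hsub
  -- Step B : T/H → 1
  have hTH : Tendsto (fun x => T x / H x) atTop (nhds 1) := by
    rw [Metric.tendsto_nhds]
    intro δ hδ
    obtain ⟨M₁, hM₁⟩ := eventually_atTop.mp
      (Metric.tendsto_nhds.mp hfεtail (δ/2) (by linarith))
    filter_upwards [eventually_ge_atTop (max M M₁)] with x hx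
    have hxM : M ≤ x := le_trans (le_max_left _ _) hx
    have hxM₁ : M₁ ≤ x := le_trans (le_max_right _ _) hx
    have hIf : IntegrableOn fε (Ioi x) := hint.integrableOn
    have hIh : IntegrableOn h (Ioi x) := hhInt x hxM
    have hHx := hHpos x hxM
    have hbound : |T x - H x| ≤ δ/2 * H x := by
      rw [hTdef, hHdef, ← integral_sub hIf hIh]
      have h1' : |∫ t in Ioi x, (fε t - h t)| ≤ ∫ t in Ioi x, |fε t - h t| := by
        simpa [Real.norm_eq_abs] using
          norm_integral_le_integral_norm (μ := volume.restrict (Ioi x)) (fun t => fε t - h t)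
      refine le_trans h1' ?_
      have h2' : ∫ t in Ioi x, |fε t - h t| ≤ ∫ t in Ioi x, δ/2 * h t := by
        refine setIntegral_mono_on ((hIf.sub hIh).abs) (hIh.const_mul _)
          measurableSet_Ioi ?_
        intro t ht
        have htM : M ≤ t := le_of_lt (lt_of_le_of_lt hxM ht)
        have htpos : 0 < t := lt_of_lt_of_le hMpos htM
        have hht := hpos t htpos
        have hd := hM₁ t (le_of_lt (lt_of_le_of_lt hxM₁ ht))
        rw [Real.dist_eq] at hd
        have heq2 : fε t - h t = (fε t / h t - 1) * h t := by field_simp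
        rw [heq2, abs_mul, abs_of_pos hht]
        exact mul_le_mul_of_nonneg_right (le_of_lt hd) hht.le
      refine le_trans h2' (le_of_eq ?_)
      rw [integral_const_mul]
    rw [Real.dist_eq]
    have heq : |T x / H x - 1| = |T x - H x| / H x := by
      rw [show T x / H x - 1 = (T x - H x) / H x by field_simp]
      rw [abs_div, abs_of_pos hHx]
    rw [heq]
    calc |T x - H x| / H x ≤ δ/2 := (div_le_iff₀ hHx).mpr (by linarith)
      _ < δ := by linarith
  -- H → 0
  have hH0 : Tendsto H atTop (nhds 0) := by
    have h2T : Tendsto (fun x => 2 * T x) atTop (nhds 0) := by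
      simpa using hT0.const_mul 2
    refine tendsto_of_tendsto_of_tendsto_of_le_of_le' tendsto_const_nhds h2T ?_ ?_
    · filter_upwards [eventually_ge_atTop M] with x hx
      refine setIntegral_nonneg measurableSet_Ioi fun t ht => ?_
      exact (hpos t (lt_trans (lt_of_lt_of_le hMpos hx) ht)).le
    · filter_upwards [eventually_ge_atTop M] with x hx
      have : T x * 2 = ∫ t in Ioi x, 2 * fε t := by
        rw [hTdef]; rw [integral_const_mul]; ring
      rw [hHdef, mul_comm, this]
      refine setIntegral_mono_on (hhInt x hx) ((hint.integrableOn).const_mul 2)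
        measurableSet_Ioi fun t ht => ?_
      exact hhle t (le_of_lt (lt_of_le_of_lt hx ht))
  -- G → 0
  have hG0 : Tendsto G atTop (nhds 0) := by
    have hb : (0:ℝ) < 1/C₄ := by positivity
    have h₁ := tendsto_rpow_mul_exp_neg_mul_atTop_nhds_zero (a/C₃) (1/C₄) hb
    have h₂ := (h₁.comp (tendsto_rpow_atTop h3)).const_mul K
    rw [mul_zero] at h₂
    refine h₂.congr' ?_
    filter_upwards [eventually_gt_atTop (0:ℝ)] with x hx
    have e1 : (x ^ C₃) ^ (a/C₃) = x ^ a := by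
      rw [← Real.rpow_mul hx.le]
      congr 1
      field_simp
    have e2 : -(1/C₄) * x ^ C₃ = -x ^ C₃ / C₄ := by ring
    simp only [Function.comp_apply, hG]
    rw [e1, e2]
    ring
  -- derivative of H
  have hHderiv : ∀ᶠ x in atTop, HasDerivAt H (-(h x)) x := by
    filter_upwards [eventually_gt_atTop M] with x hx
    have hxpos : 0 < x := lt_trans hMpos hx
    have hiv : IntervalIntegrable h volume M x := by
      rw [intervalIntegrable_iff, uIoc_of_le hx.le]
      exact (hhInt M le_rfl).mono_set Ioc_subset_Ioi_self
    have hcont : ContinuousAt h x := by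
      have hc1 : ContinuousAt (fun t : ℝ => t ^ C₂) x :=
        Real.continuousAt_rpow_const x C₂ (Or.inl hxpos.ne')
      have hc2 : ContinuousAt (fun t : ℝ => t ^ C₃) x :=
        Real.continuousAt_rpow_const x C₃ (Or.inl hxpos.ne')
      exact (continuousAt_const.mul hc1).mul (((hc2.neg).div_const C₄).rexp)
    have hFTC : HasDerivAt (fun y => ∫ t in M..y, h t) (h x) x :=
      intervalIntegral.integral_hasDerivAt_right hiv
        hmeas.stronglyMeasurable.stronglyMeasurableAtFilter hcont
    have hconst : HasDerivAt (fun _ : ℝ => ∫ t in Ioi M, h t) 0 x := hasDerivAt_const _ _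
    have hsplit : ∀ y : ℝ, M ≤ y → H y = (∫ t in Ioi M, h t) - ∫ t in M..y, h t := by
      intro y hy
      rw [intervalIntegral.integral_of_le hy, hHdef]
      have hunion : Ioc M y ∪ Ioi y = Ioi M := Ioc_union_Ioi_eq_Ioi hy
      have := setIntegral_union Ioc_disjoint_Ioi_same measurableSet_Ioi
        ((hhInt M le_rfl).mono_set Ioc_subset_Ioi_self) (hhInt y hy)
      rw [hunion] at this
      rw [this]; ring
    have heq : H =ᶠ[nhds x] fun y => (∫ t in Ioi M, h t) - ∫ t in M..y, h t := by
      filter_upwards [isOpen_Ioi.mem_nhds (mem_Ioi.mpr hx)] with y hy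
      exact hsplit y (le_of_lt hy)
    have := (hconst.sub hFTC).congr_of_eventuallyEq heq
    simpa using this
  -- derivative of G
  set w : ℝ → ℝ := fun x => K * a / C₁ * x ^ (-C₃) with hw
  set G' : ℝ → ℝ := fun x => Real.exp (-x ^ C₃ / C₄) * (C₁ * x ^ C₂ * (w x - 1))
    with hG'
  have hGderiv : ∀ x : ℝ, 0 < x → HasDerivAt G (G' x) x := by
    intro x hx
    have hx0 : x ≠ 0 := hx.ne'
    have hd1 : HasDerivAt (fun y : ℝ => y ^ a) (a * x ^ (a - 1)) x :=
      Real.hasDerivAt_rpow_const (Or.inl hx0)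
    have hd2 : HasDerivAt (fun y : ℝ => -y ^ C₃ / C₄) (-(C₃ * x ^ (C₃ - 1)) / C₄) x :=
      ((Real.hasDerivAt_rpow_const (Or.inl hx0)).neg).div_const C₄
    have hd3 : HasDerivAt (fun y : ℝ => Real.exp (-y ^ C₃ / C₄))
        (Real.exp (-x ^ C₃ / C₄) * (-(C₃ * x ^ (C₃ - 1)) / C₄)) x := hd2.exp
    have hd : HasDerivAt (fun y : ℝ => K * (y ^ a * Real.exp (-y ^ C₃ / C₄)))
        (K * (a * x ^ (a - 1) * Real.exp (-x ^ C₃ / C₄) +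
          x ^ a * (Real.exp (-x ^ C₃ / C₄) * (-(C₃ * x ^ (C₃ - 1)) / C₄)))) x :=
      (hd1.mul hd3).const_mul K
    have hGfun : G = fun y : ℝ => K * (y ^ a * Real.exp (-y ^ C₃ / C₄)) := by
      funext y; rw [hG]; ring
    rw [hGfun]
    convert hd using 1
    have e1 : x ^ (a - 1) = x ^ C₂ * x ^ (-C₃) := by
      rw [← Real.rpow_add hx]; congr 1; rw [ha]; ring
    have e2 : x ^ a * x ^ (C₃ - 1) = x ^ C₂ := by
      rw [← Real.rpow_add hx]; congr 1; rw [ha]; ring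
    have e3 : K * C₃ / C₄ = C₁ := by rw [hK]; field_simp
    have hinv : C₁ * C₁⁻¹ = 1 := mul_inv_cancel₀ h1.ne'
    rw [hG', hw]
    linear_combination (-(K * a * Real.exp (-x ^ C₃ / C₄))) * e1
      + (K * C₃ / C₄ * Real.exp (-x ^ C₃ / C₄)) * e2
      + (x ^ C₂ * Real.exp (-x ^ C₃ / C₄)) * e3
      + (K * a * x ^ C₂ * x ^ (-C₃) * Real.exp (-x ^ C₃ / C₄)) * hinv
  -- w → 0
  have hwto : Tendsto w atTop (nhds 0) := by
    have := (tendsto_rpow_neg_atTop h3).const_mul (K * a / C₁)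
    rw [mul_zero] at this
    exact this
  have hwev : ∀ᶠ x in atTop, |w x| < 1/2 := by
    have := Metric.tendsto_nhds.mp hwto (1/2) (by norm_num)
    simpa [Real.dist_eq] using this
  have hG'ne : ∀ᶠ x in atTop, G' x ≠ 0 := by
    filter_upwards [hwev, eventually_gt_atTop (0:ℝ)] with x hwx hx
    have hE := Real.exp_pos (-x ^ C₃ / C₄)
    have hA := Real.rpow_pos_of_pos hx C₂
    have hwlt : w x - 1 < 0 := by
      have := (abs_lt.mp hwx).2
      linarith
    have : G' x < 0 := by
      rw [hG']
      exact mul_neg_of_pos_of_neg hE (mul_neg_of_pos_of_neg (by positivity) hwlt)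
    exact this.ne
  have hratio : Tendsto (fun x => -(h x) / G' x) atTop (nhds 1) := by
    have hlim : Tendsto (fun x => (1 - w x)⁻¹) atTop (nhds 1) := by
      have := (tendsto_const_nhds.sub hwto).inv₀
        (by norm_num : (1:ℝ) - 0 ≠ 0)
      simpa using this
    refine hlim.congr' ?_
    filter_upwards [hwev, eventually_gt_atTop (0:ℝ)] with x hwx hx
    have hE := (Real.exp_pos (-x ^ C₃ / C₄)).ne'
    have hA := (Real.rpow_pos_of_pos hx C₂).ne'
    have hw1 : w x - 1 ≠ 0 := by
      have := (abs_lt.mp hwx).2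
      intro hc; rw [sub_eq_zero] at hc; rw [hc] at this; linarith
    have hw1' : (1:ℝ) - w x ≠ 0 := fun hc => hw1 (by linarith [sub_eq_zero.mp hc])
    rw [hh, hG']
    field_simp
    ring
  have hHG : Tendsto (fun x => H x / G x) atTop (nhds 1) :=
    HasDerivAt.lhopital_zero_atTop hHderiv
      (by filter_upwards [eventually_gt_atTop (0:ℝ)] with x hx
          exact hGderiv x hx)
      hG'ne hH0 hG0 hratio
  have hfin : Tendsto (fun x => T x / G x) atTop (nhds 1) := by
    refine Tendsto.congr' ?_ (by simpa using hTH.mul hHG)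
    filter_upwards [eventually_ge_atTop M] with x hx
    exact div_mul_div_cancel₀ (hHpos x hx).ne'
  exact hfin

/-- **Thin-tailed case.** If `X ⟂ ε`, `p = P(X < ε) > 0`, `X` has density
`f_X(x) ~ (C/λ) x^{-1/λ-1}`, and `ε` has density `f_ε(x) ~ C₁ x^{C₂} exp(-x^{C₃}/C₄)` as
`x → ∞`, then the conditional density `g(x) = (1 - F_ε(x)) f_X(x) / p` of `X` given
`{X < ε}` satisfies `g(x) ~ (C₄C₁C/(C₃λp)) x^{C₂ - 1/λ - C₃} exp(-x^{C₃}/C₄)`. -/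
theorem conditional_density_weibull_tail
    {Ω : Type*} [MeasurableSpace Ω] (P : Measure Ω) [IsProbabilityMeasure P]
    (X ε : Ω → ℝ) (hX : Measurable X) (hε : Measurable ε)
    (hindep : IndepFun X ε P)
    (fX fε : ℝ → ℝ) (hfXm : Measurable fX) (hfX0 : ∀ x, 0 ≤ fX x)
    (hfεm : Measurable fε) (hfε0 : ∀ x, 0 ≤ fε x)
    (hlawX : P.map X = volume.withDensity fun x => ENNReal.ofReal (fX x))
    (hlawε : P.map ε = volume.withDensity fun x => ENNReal.ofReal (fε x))
    (p : ℝ) (hpdef : p = (P {ω | X ω < ε ω}).toReal) (hp : 0 < p)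
    (C lam C₁ C₂ C₃ C₄ : ℝ) (hC : 0 < C) (hlam : 0 < lam)
    (h1 : 0 < C₁) (h2 : 0 < C₂) (h3 : 0 < C₃) (h4 : 0 < C₄)
    (hfXtail : Tendsto (fun x => fX x / (C / lam * x ^ (-(1 / lam) - 1))) atTop (nhds 1))
    (hfεtail : Tendsto (fun x => fε x / (C₁ * x ^ C₂ * Real.exp (-x ^ C₃ / C₄)))
      atTop (nhds 1)) :
    Tendsto (fun x => ((1 - (P {ω | ε ω ≤ x}).toReal) * fX x / p) /
        (C₄ * C₁ * C / (C₃ * lam * p) * x ^ (C₂ - 1 / lam - C₃) *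
          Real.exp (-x ^ C₃ / C₄)))
      atTop (nhds 1) := by
  set μ : Measure ℝ := volume.withDensity fun x => ENNReal.ofReal (fε x) with hμ
  haveI hprob : IsProbabilityMeasure μ :=
    hlawε ▸ Measure.isProbabilityMeasure_map hε.aemeasurable
  have hintε : Integrable fε := by
    refine ⟨hfεm.aestronglyMeasurable, ?_⟩
    rw [hasFiniteIntegral_iff_ofReal (Filter.Eventually.of_forall hfε0)]
    have huniv : μ univ = 1 := measure_univ
    rw [hμ, withDensity_apply _ MeasurableSet.univ, Measure.restrict_univ] at huniv
    rw [huniv]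
    exact ENNReal.one_lt_top
  have hset : ∀ s : Set ℝ, MeasurableSet s → (μ s).toReal = ∫ t in s, fε t := by
    intro s hs
    rw [hμ, withDensity_apply _ hs,
      ← ofReal_integral_eq_lintegral_ofReal hintε.integrableOn
        (ae_restrict_of_ae (Filter.Eventually.of_forall hfε0)),
      ENNReal.toReal_ofReal (setIntegral_nonneg hs fun t _ => hfε0 t)]
  have hsum : ∀ x : ℝ, (μ (Iic x)).toReal + (μ (Ioi x)).toReal = 1 := by
    intro x
    have hadd : μ (Iic x) + μ (Ioi x) = 1 := by
      rw [← measure_union (Iic_disjoint_Ioi le_rfl) measurableSet_Ioi,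
        Iic_union_Ioi, measure_univ]
    rw [← ENNReal.toReal_add (measure_ne_top μ _) (measure_ne_top μ _), hadd,
      ENNReal.toReal_one]
  have hPeq : ∀ x : ℝ, (P {ω | ε ω ≤ x}).toReal = (μ (Iic x)).toReal := by
    intro x
    have : {ω | ε ω ≤ x} = ε ⁻¹' (Iic x) := rfl
    rw [this, ← Measure.map_apply hε measurableSet_Iic, hlawε]
  have hcompl : ∀ x : ℝ, 1 - (P {ω | ε ω ≤ x}).toReal = ∫ t in Ioi x, fε t := by
    intro x
    rw [hPeq x, ← hset (Ioi x) measurableSet_Ioi]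
    linarith [hsum x]
  have hT0 : Tendsto (fun x => ∫ t in Ioi x, fε t) atTop (nhds 0) := by
    have hm1 : Tendsto (fun x => μ (Iic x)) atTop (nhds (μ univ)) :=
      tendsto_measure_Iic_atTop μ
    rw [measure_univ] at hm1
    have hm2 : Tendsto (fun x => (μ (Iic x)).toReal) atTop (nhds 1) := by
      have := (ENNReal.tendsto_toReal ENNReal.one_ne_top).comp hm1
      exact this
    have hm3 : Tendsto (fun x => 1 - (μ (Iic x)).toReal) atTop (nhds 0) := by
      have := tendsto_const_nhds (α := ℝ) (x := (1:ℝ)) (f := atTop).sub hm2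
      simpa using this
    refine hm3.congr fun x => ?_
    rw [← hset (Ioi x) measurableSet_Ioi]
    linarith [hsum x]
  have hTG := tail_ratio_aux fε hfεm hfε0 hintε hT0 C₁ C₂ C₃ C₄ h1 h3 h4 hfεtail
  refine Tendsto.congr' ?_ (by simpa using hTG.mul hfXtail)
  filter_upwards [eventually_gt_atTop (0:ℝ)] with x hx
  rw [← hcompl x]
  have hxE : x ^ (C₂ - 1/lam - C₃) = x ^ (C₂ + 1 - C₃) * x ^ (-(1/lam) - 1) := by
    rw [← Real.rpow_add hx]; congr 1; ring
  rw [hxE]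
  have hA : x ^ (C₂ + 1 - C₃) ≠ 0 := (Real.rpow_pos_of_pos hx _).ne'
  have hB : x ^ (-(1/lam) - 1) ≠ 0 := (Real.rpow_pos_of_pos hx _).ne'
  have hE : Real.exp (-x ^ C₃ / C₄) ≠ 0 := (Real.exp_pos _).ne'
  field_simp
end

section
/- Let λ > 0 and ξ > 0. Let X and ε be independent random variables with exact Pareto distributions on [1, ∞): X has density f_X(x) = (1/λ) x^{−1/λ−1} for x ≥ 1 and ε has density f_ε(x) = (1/ξ) x^{−1/ξ−1} for x ≥ 1, and set Y = I(X − ε ≥ 0). Then P(Y = 0) = ξ/(ξ + λ) > 0, and the conditional distribution of X given Y = 0 is exactly Pareto on [1, ∞) with tail index γ = ξλ/(ξ+λ): its conditional density equals (1/γ) x^{−1/γ−1} for x ≥ 1. -/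
open MeasureTheory ProbabilityTheory Filter Set
open scoped ENNReal

lemma lint_rpow {c p x : ℝ} (hc : 0 ≤ c) (hp : p < -1) (hx : 0 < x) :
    ∫⁻ t in Ioi x, ENNReal.ofReal (c * t ^ p) =
      ENNReal.ofReal (c * (-x ^ (p + 1) / (p + 1))) := by
  rw [← ofReal_integral_eq_lintegral_ofReal]
  · rw [integral_const_mul, integral_Ioi_rpow_of_lt hp hx]
  · exact (integrableOn_Ioi_rpow_of_lt hp hx).const_mul c
  · filter_upwards [ae_restrict_mem measurableSet_Ioi] with t ht
    exact mul_nonneg hc (Real.rpow_nonneg (hx.trans ht).le _)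

lemma lint_if {c p : ℝ} (hc : 0 ≤ c) (hp : p < -1) :
    ∫⁻ t, ENNReal.ofReal (if 1 ≤ t then c * t ^ p else 0) =
      ENNReal.ofReal (c * (-1 / (p + 1))) := by
  have h : (fun t : ℝ => ENNReal.ofReal (if 1 ≤ t then c * t ^ p else 0)) =
      (Ici (1:ℝ)).indicator (fun t => ENNReal.ofReal (c * t ^ p)) := by
    funext t
    by_cases h1 : (1:ℝ) ≤ t <;> simp [indicator, mem_Ici, h1]
  rw [h, lintegral_indicator measurableSet_Ici,
    ← MeasureTheory.Measure.restrict_congr_set Ioi_ae_eq_Ici,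
    lint_rpow hc hp one_pos, Real.one_rpow]

lemma pareto_survival {ξ x : ℝ} (hξ : 0 < ξ) (hx : 1 ≤ x) :
    (volume.withDensity fun t =>
        ENNReal.ofReal (if 1 ≤ t then 1 / ξ * t ^ (-(1 / ξ) - 1) else 0)) (Ioi x) =
      ENNReal.ofReal (x ^ (-(1 / ξ))) := by
  have h0 : (0:ℝ) < x := lt_of_lt_of_le one_pos hx
  have hξ' : (0:ℝ) < 1 / ξ := by positivity
  rw [withDensity_apply _ measurableSet_Ioi,
    setLIntegral_congr_fun measurableSet_Ioi
      (g := fun t => ENNReal.ofReal (1 / ξ * t ^ (-(1 / ξ) - 1)))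
      (fun t ht => by
        simp only [if_pos (hx.trans ht.le)]),
    lint_rpow (by positivity) (by linarith) h0]
  have he : -(1 / ξ) - 1 + 1 = -(1 / ξ) := by ring
  rw [he]
  congr 1
  field_simp

/-- **Exact Pareto–Pareto example.** If `X` and `ε` are independent Pareto random variables
on `[1, ∞)` with tail indices `λ` and `ξ`, and `Y = I(X - ε ≥ 0)`, then
`P(Y = 0) = ξ/(ξ+λ) > 0` and the conditional distribution of `X` given `Y = 0` is exactly
Pareto on `[1, ∞)` with tail index `γ = ξλ/(ξ+λ)`. -/
theorem pareto_pareto_conditional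
    {Ω : Type*} [MeasurableSpace Ω] (P : Measure Ω) [IsProbabilityMeasure P]
    (lam ξ : ℝ) (hlam : 0 < lam) (hξ : 0 < ξ)
    (X ε : Ω → ℝ) (hX : Measurable X) (hε : Measurable ε)
    (hindep : IndepFun X ε P)
    (hlawX : P.map X = volume.withDensity fun x =>
      ENNReal.ofReal (if 1 ≤ x then 1 / lam * x ^ (-(1 / lam) - 1) else 0))
    (hlawε : P.map ε = volume.withDensity fun x =>
      ENNReal.ofReal (if 1 ≤ x then 1 / ξ * x ^ (-(1 / ξ) - 1) else 0)) :
    (P {ω | X ω < ε ω}).toReal = ξ / (ξ + lam) ∧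
    0 < (P {ω | X ω < ε ω}).toReal ∧
    (P[|{ω | X ω < ε ω}]).map X = volume.withDensity fun x =>
      ENNReal.ofReal (if 1 ≤ x then
        1 / (ξ * lam / (ξ + lam)) * x ^ (-(1 / (ξ * lam / (ξ + lam))) - 1) else 0) := by
  have hsum : (0:ℝ) < ξ + lam := by linarith
  have hlam' : (0:ℝ) < 1 / lam := by positivity
  have hξ' : (0:ℝ) < 1 / ξ := by positivity
  set A := {ω | X ω < ε ω} with hAdef
  set fl : ℝ → ℝ≥0∞ :=
    fun x => ENNReal.ofReal (if 1 ≤ x then 1 / lam * x ^ (-(1 / lam) - 1) else 0) with hfl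
  have hflm : Measurable fl := by
    apply ENNReal.measurable_ofReal.comp
    apply Measurable.ite measurableSet_Ici _ measurable_const
    fun_prop
  set g : ℝ → ℝ≥0∞ := fun x => (P.map ε) (Ioi x) with hg
  have hgm : Measurable g := by
    have : Antitone g := fun a b hab => measure_mono (Ioi_subset_Ioi hab)
    exact this.measurable
  have hg1 : ∀ x : ℝ, 1 ≤ x → g x = ENNReal.ofReal (x ^ (-(1 / ξ))) := by
    intro x hx
    have h := pareto_survival (ξ := ξ) hξ hx
    simp only [hg, hlawε]
    exact h
  have hpair : P.map (fun ω => (X ω, ε ω)) = (P.map X).prod (P.map ε) :=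
    (indepFun_iff_map_prod_eq_prod_map_map hX.aemeasurable hε.aemeasurable).mp hindep
  haveI : IsProbabilityMeasure (P.map ε) := Measure.isProbabilityMeasure_map hε.aemeasurable
  have hltm : MeasurableSet {p : ℝ × ℝ | p.1 < p.2} :=
    measurableSet_lt measurable_fst measurable_snd
  -- the key identity
  have key : ∀ s : Set ℝ, MeasurableSet s →
      P (X ⁻¹' s ∩ A) = ∫⁻ x in s, fl x * g x := by
    intro s hs
    have h1 : X ⁻¹' s ∩ A =
        (fun ω => (X ω, ε ω)) ⁻¹' ((s ×ˢ (univ : Set ℝ)) ∩ {p : ℝ × ℝ | p.1 < p.2}) := by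
      ext ω
      simp [hAdef, and_comm]
    rw [h1, ← Measure.map_apply (hX.prodMk hε) (((hs.prod MeasurableSet.univ)).inter hltm),
      hpair, Measure.prod_apply (((hs.prod MeasurableSet.univ)).inter hltm)]
    have h2 : (fun x => (P.map ε) (Prod.mk x ⁻¹' ((s ×ˢ (univ : Set ℝ)) ∩ {p : ℝ × ℝ | p.1 < p.2})))
        = s.indicator g := by
      funext x
      by_cases hx : x ∈ s
      · have : Prod.mk x ⁻¹' ((s ×ˢ (univ : Set ℝ)) ∩ {p : ℝ × ℝ | p.1 < p.2}) = Ioi x := by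
          ext y; simp [hx]
        simp [this, indicator_of_mem hx, hg]
      · have : Prod.mk x ⁻¹' ((s ×ˢ (univ : Set ℝ)) ∩ {p : ℝ × ℝ | p.1 < p.2}) = ∅ := by
          ext y; simp [hx]
        simp [this, indicator_of_notMem hx]
    rw [h2, lintegral_indicator hs, hlawX,
      setLIntegral_withDensity_eq_setLIntegral_mul volume hflm hgm hs]
    rfl
  -- the density of fl * g
  have hfg : ∀ x : ℝ, fl x * g x =
      ENNReal.ofReal (if 1 ≤ x then 1 / lam * x ^ (-(1 / lam) - 1 + -(1 / ξ)) else 0) := by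
    intro x
    by_cases h1 : (1:ℝ) ≤ x
    · have h0 : (0:ℝ) < x := lt_of_lt_of_le one_pos h1
      rw [hfl]
      simp only [if_pos h1]
      rw [hg1 x h1, ← ENNReal.ofReal_mul (by positivity), mul_assoc,
        ← Real.rpow_add h0]
    · simp [hfl, if_neg h1, h1]
  have hq : -(1 / lam) - 1 + -(1 / ξ) < -1 := by linarith
  have hPA : P A = ENNReal.ofReal (ξ / (ξ + lam)) := by
    have h := key univ MeasurableSet.univ
    simp only [preimage_univ, univ_inter, Measure.restrict_univ] at h
    rw [h]
    simp_rw [hfg]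
    rw [lint_if (by positivity) hq]
    congr 1
    have h2 : -(1 / lam) - 1 + -(1 / ξ) + 1 = -((ξ + lam) / (lam * ξ)) := by
      field_simp
      ring
    rw [h2, div_neg, neg_div, neg_neg, one_div_div]
    field_simp
  refine ⟨?_, ?_, ?_⟩
  · rw [hPA, ENNReal.toReal_ofReal (by positivity)]
  · rw [hPA, ENNReal.toReal_ofReal (by positivity)]
    positivity
  · have hrest : (P.restrict A).map X = volume.withDensity (fun x => fl x * g x) := by
      ext s hs
      rw [Measure.map_apply hX hs, Measure.restrict_apply (hX hs), key s hs,
        withDensity_apply _ hs]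
    show ((P A)⁻¹ • P.restrict A).map X = _
    rw [Measure.map_smul, hrest, ← withDensity_smul _ (f := fun x => fl x * g x) (hflm.mul hgm)]
    congr 1
    funext x
    simp only [Pi.smul_apply, smul_eq_mul, hfg x, hPA]
    rw [← ENNReal.ofReal_inv_of_pos (by positivity)]
    by_cases h1 : (1:ℝ) ≤ x
    · simp only [if_pos h1]
      rw [← ENNReal.ofReal_mul (by positivity)]
      congr 1
      have hexp : -(1 / lam) - 1 + -(1 / ξ) = -(1 / (ξ * lam / (ξ + lam))) - 1 := by
        field_simp
        ring
      rw [hexp, ← mul_assoc]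
      congr 1
      field_simp
    · simp [if_neg h1]
end

section
/- For every integer k ≥ 1, the function f(v₁, …, v_k) = exp(−e^{−v_k}) ∏_{j=1}^k e^{−v_j}, defined on the ordered region {(v₁, …, v_k) ∈ ℝ^k : v_k ≤ v_{k−1} ≤ ⋯ ≤ v₁} and set to 0 elsewhere, is a probability density: it is nonnegative and ∫_{ℝ^k} f = 1. (This is the joint limiting density f_{V|γ}(v₁,…,v_k) = G_γ(v_k) ∏_{j=1}^k g_γ(v_j)/G_γ(v_j) of the k largest normalized order statistics, specialized to the Gumbel case γ = 0.) -/
open MeasureTheory Filter Set Topology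

attribute [local instance] Classical.propDecidable

noncomputable section

/-- The joint limiting density of the `k` largest normalized order statistics in the Gumbel
case `γ = 0`: `f(v₁,…,v_k) = exp(-e^{-v_k}) ∏_{j=1}^k e^{-v_j}` on the ordered region
`{v_k ≤ v_{k-1} ≤ ⋯ ≤ v₁}`, and `0` elsewhere. -/
def gumbelJoint (k : ℕ) (v : Fin k → ℝ) : ℝ :=
  if hk : k = 0 then 0
  else if ∀ i j : Fin k, i ≤ j → v j ≤ v i then
    Real.exp (-Real.exp (-v ⟨k - 1, by omega⟩)) * ∏ j, Real.exp (-v j)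
  else 0

private lemma hasDerivAt_G (x : ℝ) :
    HasDerivAt (fun x => Real.exp (-Real.exp (-x)))
      (Real.exp (-x) * Real.exp (-Real.exp (-x))) x := by
  have h1 : HasDerivAt (fun x : ℝ => -Real.exp (-x)) (Real.exp (-x)) x := by
    exact (((hasDerivAt_neg x).exp).neg).congr_deriv (by ring)
  simpa [mul_comm] using h1.exp

private lemma tendsto_G_atBot :
    Tendsto (fun x => Real.exp (-Real.exp (-x))) atBot (𝓝 0) := by
  apply Real.tendsto_exp_atBot.comp
  exact tendsto_neg_atTop_atBot.comp (Real.tendsto_exp_atTop.comp tendsto_neg_atBot_atTop)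

private lemma tendsto_G_atTop :
    Tendsto (fun x => Real.exp (-Real.exp (-x))) atTop (𝓝 1) := by
  have h : Tendsto (fun x : ℝ => -Real.exp (-x)) atTop (𝓝 0) := by
    simpa using (Real.tendsto_exp_atBot.comp tendsto_neg_atTop_atBot).neg
  have h2 := (Real.continuous_exp.tendsto 0).comp h
  rw [Real.exp_zero] at h2
  exact h2

private lemma g_cont : Continuous (fun x : ℝ => Real.exp (-x) * Real.exp (-Real.exp (-x))) := by
  continuity

private lemma G_le_one (x : ℝ) : Real.exp (-Real.exp (-x)) ≤ 1 := by
  rw [show (1:ℝ) = Real.exp 0 by simp]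
  exact Real.exp_le_exp.2 (neg_nonpos.mpr (Real.exp_pos _).le)

private lemma g_integrableOn_Iic (c : ℝ) :
    IntegrableOn (fun x : ℝ => Real.exp (-x) * Real.exp (-Real.exp (-x))) (Iic c) := by
  apply integrableOn_Iic_of_intervalIntegral_norm_bounded (l := atBot) (a := id) 1 c
  · intro i; exact g_cont.integrableOn_Ioc
  · exact tendsto_id
  · filter_upwards [eventually_le_atBot c] with r (hr : r ≤ c)
    have h1 : ∀ x, ‖Real.exp (-x) * Real.exp (-Real.exp (-x))‖
        = Real.exp (-x) * Real.exp (-Real.exp (-x)) := by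
      intro x; rw [Real.norm_eq_abs, abs_of_nonneg (by positivity)]
    calc (∫ x in (id r)..c, ‖Real.exp (-x) * Real.exp (-Real.exp (-x))‖)
        = ∫ x in r..c, Real.exp (-x) * Real.exp (-Real.exp (-x)) := by
          simp only [id]; exact intervalIntegral.integral_congr fun x _ => h1 x
      _ = Real.exp (-Real.exp (-c)) - Real.exp (-Real.exp (-r)) := by
          apply intervalIntegral.integral_eq_sub_of_hasDerivAt (fun x _ => hasDerivAt_G x)
          exact g_cont.intervalIntegrable r c
      _ ≤ 1 := by
          have := G_le_one c
          have : (0:ℝ) ≤ Real.exp (-Real.exp (-r)) := by positivity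
          linarith [G_le_one c]

private lemma integral_g_Iic (c : ℝ) :
    ∫ x in Iic c, Real.exp (-x) * Real.exp (-Real.exp (-x)) = Real.exp (-Real.exp (-c)) := by
  have := integral_Iic_of_hasDerivAt_of_tendsto' (a := c) (m := 0)
    (fun x _ => hasDerivAt_G x) (g_integrableOn_Iic c) tendsto_G_atBot
  simpa using this

private lemma lintegral_g_Iic (c : ℝ) :
    ∫⁻ x in Iic c, ENNReal.ofReal (Real.exp (-x) * Real.exp (-Real.exp (-x)))
      = ENNReal.ofReal (Real.exp (-Real.exp (-c))) := by
  rw [← ofReal_integral_eq_lintegral_ofReal (g_integrableOn_Iic c)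
    (Eventually.of_forall fun x => by positivity), integral_g_Iic]

private lemma g_integrable :
    Integrable (fun x : ℝ => Real.exp (-x) * Real.exp (-Real.exp (-x))) := by
  rw [← integrableOn_univ, ← Set.Iic_union_Ioi (a := (0:ℝ)), integrableOn_union]
  refine ⟨g_integrableOn_Iic 0, ?_⟩
  apply Integrable.mono (exp_neg_integrableOn_Ioi 0 one_pos)
    (g_cont.aestronglyMeasurable.restrict)
  filter_upwards with x
  rw [Real.norm_eq_abs, Real.norm_eq_abs, abs_of_nonneg (by positivity),
    abs_of_nonneg (by positivity)]
  calc Real.exp (-x) * Real.exp (-Real.exp (-x)) ≤ Real.exp (-x) * 1 := by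
        exact mul_le_mul_of_nonneg_left (G_le_one x) (by positivity)
    _ = Real.exp (-1 * x) := by rw [mul_one, neg_mul, one_mul]

private lemma lintegral_g :
    ∫⁻ x : ℝ, ENNReal.ofReal (Real.exp (-x) * Real.exp (-Real.exp (-x))) = 1 := by
  rw [← ofReal_integral_eq_lintegral_ofReal g_integrable
    (Eventually.of_forall fun x => by positivity)]
  have h2 : (∫ x : ℝ, Real.exp (-x) * Real.exp (-Real.exp (-x))) = 1 - 0 :=
    integral_of_hasDerivAt_of_tendsto (fun x => hasDerivAt_G x) g_integrable
      tendsto_G_atBot tendsto_G_atTop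
  rw [h2]; norm_num

private lemma measurable_gumbelJoint (k : ℕ) : Measurable (gumbelJoint k) := by
  unfold gumbelJoint
  split
  · exact measurable_const
  · refine Measurable.ite ?_ ?_ measurable_const
    · have : {v : Fin k → ℝ | ∀ i j : Fin k, i ≤ j → v j ≤ v i}
          = ⋂ (i : Fin k), ⋂ (j : Fin k), ⋂ (_ : i ≤ j), {v | v j ≤ v i} := by
        ext v; simp
      rw [this]
      exact MeasurableSet.iInter fun i => MeasurableSet.iInter fun j =>
        MeasurableSet.iInter fun _ =>
          measurableSet_le (measurable_pi_apply j) (measurable_pi_apply i)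
    · exact ((measurable_pi_apply _).neg.exp.neg.exp).mul
        (Finset.measurable_prod _ fun j _ => (measurable_pi_apply j).neg.exp)

private lemma gumbelJoint_nonneg (k : ℕ) (v : Fin k → ℝ) : 0 ≤ gumbelJoint k v := by
  unfold gumbelJoint
  split
  · exact le_refl 0
  split
  · positivity
  · exact le_refl 0

private lemma gumbelJoint_one (v : Fin 1 → ℝ) :
    gumbelJoint 1 v = Real.exp (-v 0) * Real.exp (-Real.exp (-v 0)) := by
  unfold gumbelJoint
  rw [dif_neg one_ne_zero, if_pos]
  · have h0 : (⟨1 - 1, by omega⟩ : Fin 1) = 0 := rfl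
    rw [h0, Fin.prod_univ_one, mul_comm]
  · intro i j _; rw [Subsingleton.elim i j]

private lemma gumbelJoint_snoc (n : ℕ) (hn : 1 ≤ n) (y : Fin n → ℝ) (x : ℝ) :
    gumbelJoint (n + 1) (Fin.snoc y x) =
      if (∀ i j : Fin n, i ≤ j → y j ≤ y i) ∧ x ≤ y ⟨n - 1, by omega⟩ then
        (∏ j, Real.exp (-y j)) * (Real.exp (-x) * Real.exp (-Real.exp (-x)))
      else 0 := by
  unfold gumbelJoint
  rw [dif_neg (Nat.succ_ne_zero n)]
  have hcond : (∀ i j : Fin (n + 1), i ≤ j → (Fin.snoc y x : Fin (n + 1) → ℝ) j ≤ (Fin.snoc y x : Fin (n + 1) → ℝ) i) ↔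
      ((∀ i j : Fin n, i ≤ j → y j ≤ y i) ∧ x ≤ y ⟨n - 1, by omega⟩) := by
    constructor
    · intro hC
      constructor
      · intro i j hij
        have := hC i.castSucc j.castSucc (by simpa using hij)
        simpa using this
      · have h := hC (Fin.castSucc ⟨n - 1, by omega⟩) (Fin.last n) ((Fin.castSucc_lt_last _).le)
        rwa [Fin.snoc_last, Fin.snoc_castSucc] at h
    · rintro ⟨hy, hx⟩ i j hij
      rcases Fin.eq_castSucc_or_eq_last j with ⟨j', rfl⟩ | rfl
      · rcases Fin.eq_castSucc_or_eq_last i with ⟨i', rfl⟩ | rfl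
        · have : i' ≤ j' := by simpa using hij
          simpa using hy i' j' this
        · exact absurd (le_antisymm hij (Fin.le_last _)) (Fin.castSucc_lt_last j').ne'
      · rcases Fin.eq_castSucc_or_eq_last i with ⟨i', rfl⟩ | rfl
        · have h1 : x ≤ y i' := by
            refine le_trans hx (hy i' ⟨n - 1, by omega⟩ ?_)
            simp only [Fin.le_def]
            omega
          simpa using h1
        · simp
  rw [if_congr hcond rfl rfl]
  split
  · have hlast : (⟨n + 1 - 1, by omega⟩ : Fin (n + 1)) = Fin.last n := rfl
    rw [hlast, Fin.snoc_last, Fin.prod_univ_castSucc]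
    simp only [Fin.snoc_castSucc, Fin.snoc_last]
    ring
  · rfl

private lemma inner_lintegral (n : ℕ) (hn : 1 ≤ n) (y : Fin n → ℝ) :
    ∫⁻ x : ℝ, ENNReal.ofReal (gumbelJoint (n + 1) (Fin.snoc y x))
      = ENNReal.ofReal (gumbelJoint n y) := by
  by_cases hy : ∀ i j : Fin n, i ≤ j → y j ≤ y i
  · set c := y ⟨n - 1, by omega⟩ with hc
    set P := ∏ j, Real.exp (-y j) with hP
    have hPpos : 0 ≤ P := by rw [hP]; positivity
    have h1 : (fun x => ENNReal.ofReal (gumbelJoint (n + 1) (Fin.snoc y x)))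
        = (Iic c).indicator (fun x =>
            ENNReal.ofReal P * ENNReal.ofReal (Real.exp (-x) * Real.exp (-Real.exp (-x)))) := by
      funext x
      rw [gumbelJoint_snoc n hn]
      by_cases hx : x ≤ c
      · rw [if_pos ⟨hy, hx⟩, indicator_of_mem (mem_Iic.2 hx), ← ENNReal.ofReal_mul hPpos]
      · rw [if_neg (fun h => hx h.2), indicator_of_notMem (by simpa using hx)]
        simp
    rw [h1, lintegral_indicator measurableSet_Iic, lintegral_const_mul _
      ((g_cont.measurable).ennreal_ofReal), lintegral_g_Iic]
    unfold gumbelJoint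
    rw [dif_neg (by omega : ¬ n = 0), if_pos hy, ENNReal.ofReal_mul (by positivity), ← hP, ← hc,
      mul_comm]
  · have h2 : ∀ x : ℝ, gumbelJoint (n + 1) (Fin.snoc y x) = 0 := by
      intro x; rw [gumbelJoint_snoc n hn, if_neg (fun h => hy h.1)]
    have h3 : gumbelJoint n y = 0 := by
      unfold gumbelJoint; rw [dif_neg (by omega : ¬ n = 0), if_neg hy]
    simp [h2, h3]

private lemma lintegral_gumbelJoint : ∀ k : ℕ, 1 ≤ k →
    ∫⁻ v : Fin k → ℝ, ENNReal.ofReal (gumbelJoint k v) = 1 := by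
  intro k
  induction k with
  | zero => intro h; exact absurd h (by norm_num)
  | succ n ih =>
    intro _
    rcases Nat.eq_zero_or_pos n with rfl | hn
    · -- base case k = 1
      have hmeas : Measurable fun v : Fin 1 → ℝ => ENNReal.ofReal (gumbelJoint 1 v) :=
        (measurable_gumbelJoint 1).ennreal_ofReal
      have h := ((volume_preserving_funUnique (Fin 1) ℝ).symm _).lintegral_comp hmeas
      show ∫⁻ v : Fin 1 → ℝ, ENNReal.ofReal (gumbelJoint 1 v) = 1
      refine h.symm.trans ?_
      have : ∀ x : ℝ, gumbelJoint 1 ((MeasurableEquiv.funUnique (Fin 1) ℝ).symm x)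
          = Real.exp (-x) * Real.exp (-Real.exp (-x)) := by
        intro x; rw [gumbelJoint_one]; rfl
      simp_rw [this]
      exact lintegral_g
    · -- inductive step
      set e := MeasurableEquiv.piFinSuccAbove (fun _ : Fin (n + 1) => ℝ) (Fin.last n) with he
      have hmeas : Measurable fun v : Fin (n + 1) → ℝ => ENNReal.ofReal (gumbelJoint (n + 1) v) :=
        (measurable_gumbelJoint _).ennreal_ofReal
      have hmp := ((volume_preserving_piFinSuccAbove (fun _ : Fin (n + 1) => ℝ)
        (Fin.last n)).symm _)
      have step1 : ∫⁻ v : Fin (n + 1) → ℝ, ENNReal.ofReal (gumbelJoint (n + 1) v)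
          = ∫⁻ z : ℝ × (Fin n → ℝ), ENNReal.ofReal (gumbelJoint (n + 1) (e.symm z))
              ∂((volume : Measure ℝ).prod volume) := by
        rw [← MeasureTheory.Measure.volume_eq_prod]
        exact (hmp.lintegral_comp hmeas).symm
      have step2 := lintegral_prod_symm' (μ := (volume : Measure ℝ))
        (ν := (volume : Measure (Fin n → ℝ)))
        (fun z : ℝ × (Fin n → ℝ) => ENNReal.ofReal (gumbelJoint (n + 1) (e.symm z)))
        (hmeas.comp e.symm.measurable)
      rw [step1, step2]
      have key : ∀ y : Fin n → ℝ, ∀ x : ℝ,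
          gumbelJoint (n + 1) (e.symm (x, y)) = gumbelJoint (n + 1) (Fin.snoc y x) := by
        intro y x
        congr 1
        simp [he, MeasurableEquiv.piFinSuccAbove, Fin.insertNth_last', Fin.snocEquiv]
      calc ∫⁻ y : Fin n → ℝ, ∫⁻ x : ℝ, ENNReal.ofReal (gumbelJoint (n + 1) (e.symm (x, y)))
          = ∫⁻ y : Fin n → ℝ, ENNReal.ofReal (gumbelJoint n y) := by
            refine lintegral_congr fun y => ?_
            simp_rw [key y]
            exact inner_lintegral n hn y
        _ = 1 := ih hn

/-- **The Gumbel joint extreme-value density is a probability density**: it is nonnegative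
and integrates to `1` over `ℝ^k`. -/
theorem gumbelJoint_isProbabilityDensity (k : ℕ) (hk : 1 ≤ k) :
    (∀ v : Fin k → ℝ, 0 ≤ gumbelJoint k v) ∧
    (∫ v : Fin k → ℝ, gumbelJoint k v) = 1 := by
  refine ⟨gumbelJoint_nonneg k, ?_⟩
  rw [integral_eq_lintegral_of_nonneg_ae (Eventually.of_forall (gumbelJoint_nonneg k))
    (measurable_gumbelJoint k).aestronglyMeasurable, lintegral_gumbelJoint k hk]
  rfl

end
end
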